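/- Let 0 = x_0 < x_1 < ... < x_n < 1 be the sorted first n elements of the van der Corput sequence in base 2 together with 0. Then for every i with 0 ≤ i ≤ n and every r ≥ 1 (indices taken cyclically modulo n+1, with wrap-around intervals measured as cyclic arc length on R/Z), the cyclic length from x_i to x_{i+r} satisfies x_r − x_0 ≤ (cyclic length from x_i to x_{i+r}). -/

import Mathlib

/-- The van der Corput sequence in base 2: binary radical inverse of `m`. -/
noncomputable def vdc (m : ℕ) : ℝ :=
  ∑ j ∈ Finset.range m, if m.testBit j then (1 : ℝ) / 2 ^ (j + 1) else 0

/-!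
Let `F t` count the points `vdc m`, `m ≤ n`, lying below `t`. As `x` enumerates these points in
increasing order, `F (x k) = k`, and `F t ≤ k` forces `t ≤ x k`; so the claim follows from the
subadditivity `F (t + u) + F (t + u - 1) ≤ F t + F u` (for `t, u ∈ [0, 1]`) of the count lifted
to `ℝ`. That is proved by induction on the number `N` of points: since `vdc (2k) = vdc k / 2` and
`vdc (2k + 1) = 1 / 2 + vdc k / 2`, the count of `N` points at `t` is the count of `⌈N / 2⌉`
points at `2t` plus that of `⌊N / 2⌋` points at `2t - 1`, and the larger half exceeds the smaller
one by a count that is monotone in `t`.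
-/

open Finset

theorem vdc_zero : vdc 0 = 0 := by simp [vdc]

theorem vdc_nonneg (m : ℕ) : 0 ≤ vdc m :=
  sum_nonneg fun j _ => by split <;> positivity

theorem vdc_eq_sum_range {m K : ℕ} (h : m ≤ K) :
    vdc m = ∑ j ∈ range K, if m.testBit j then (1 : ℝ) / 2 ^ (j + 1) else 0 := by
  refine sum_subset (range_subset_range.mpr h) fun j _ hj => ?_
  have : m < 2 ^ j := m.lt_two_pow_self.trans_le (Nat.pow_le_pow_right two_pos (by simpa using hj))
  simp [Nat.testBit_lt_two_pow this]

theorem vdc_two_mul (m : ℕ) : vdc (2 * m) = vdc m / 2 := by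
  rw [vdc_eq_sum_range (by omega : 2 * m ≤ 2 * m + 1), sum_range_succ',
    vdc_eq_sum_range (by omega : m ≤ 2 * m), sum_div]
  have h0 : (2 * m).testBit 0 = false := by simp [Nat.testBit_zero]
  simp only [Nat.testBit_add_one, h0, show 2 * m / 2 = m by omega, Bool.false_eq_true, if_false,
    add_zero]
  refine sum_congr rfl fun j _ => ?_
  split <;> ring

theorem vdc_two_mul_add_one (m : ℕ) : vdc (2 * m + 1) = 1 / 2 + vdc m / 2 := by
  rw [vdc_eq_sum_range (le_refl (2 * m + 1)), sum_range_succ',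
    vdc_eq_sum_range (by omega : m ≤ 2 * m), sum_div, add_comm]
  have h0 : (2 * m + 1).testBit 0 = true := by simp [Nat.testBit_zero]
  simp only [Nat.testBit_add_one, h0, show (2 * m + 1) / 2 = m by omega, if_true]
  congr 1
  · norm_num
  refine sum_congr rfl fun j _ => ?_
  split <;> ring

theorem vdc_lt_one (m : ℕ) : vdc m < 1 := by
  induction m using Nat.strong_induction_on with
  | _ m ih =>
  obtain ⟨k, rfl | rfl⟩ := Nat.even_or_odd' m
  · rcases k.eq_zero_or_pos with rfl | hk
    · simp [vdc_zero]
    · rw [vdc_two_mul]; linarith [ih k (by omega)]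
  · rw [vdc_two_mul_add_one]; linarith [ih k (by omega)]

theorem vdc_injective : Function.Injective vdc := by
  intro m m' h
  induction hs : m + m' using Nat.strong_induction_on generalizing m m' with
  | _ s ih =>
  obtain ⟨k, rfl | rfl⟩ := Nat.even_or_odd' m <;> obtain ⟨k', rfl | rfl⟩ := Nat.even_or_odd' m'
  · rw [vdc_two_mul, vdc_two_mul] at h
    rcases Nat.eq_zero_or_pos (k + k') with h0 | h0
    · omega
    · rw [ih (k + k') (by omega) (by linarith) rfl]
  · rw [vdc_two_mul, vdc_two_mul_add_one] at h
    linarith [vdc_lt_one k, vdc_nonneg k']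
  · rw [vdc_two_mul_add_one, vdc_two_mul] at h
    linarith [vdc_lt_one k', vdc_nonneg k]
  · rw [vdc_two_mul_add_one, vdc_two_mul_add_one] at h
    rw [ih (k + k') (by omega) (by linarith) rfl]

noncomputable def vdcCount (N : ℕ) (t : ℝ) : ℕ := #{m ∈ range N | vdc m < t}

theorem vdcCount_zero (t : ℝ) : vdcCount 0 t = 0 := by simp [vdcCount]

theorem vdcCount_le (N : ℕ) (t : ℝ) : vdcCount N t ≤ N :=
  (card_filter_le _ _).trans_eq (card_range N)

theorem vdcCount_of_nonpos (N : ℕ) {t : ℝ} (ht : t ≤ 0) : vdcCount N t = 0 :=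
  card_eq_zero.mpr <| filter_false_of_mem fun m _ => by linarith [vdc_nonneg m]

theorem vdcCount_of_one_le (N : ℕ) {t : ℝ} (ht : 1 ≤ t) : vdcCount N t = N := by
  rw [vdcCount, filter_true_of_mem fun m _ => (vdc_lt_one m).trans_le ht, card_range]

theorem vdcCount_succ (N : ℕ) (t : ℝ) :
    vdcCount (N + 1) t = vdcCount N t + if vdc N < t then 1 else 0 := by
  rw [vdcCount, vdcCount, range_add_one, filter_insert]
  split
  · rw [card_insert_of_notMem (by simp)]
  · simp

/-- The number of the points `vdc B, …, vdc (A - 1)` below `t` is monotone in `t`. -/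
theorem vdcCount_add_le_add {B A : ℕ} (hBA : B ≤ A) {s t : ℝ} (hst : s ≤ t) :
    vdcCount A s + vdcCount B t ≤ vdcCount A t + vdcCount B s := by
  obtain ⟨d, rfl⟩ := Nat.exists_eq_add_of_le hBA
  induction d with
  | zero => simp [add_comm]
  | succ d ih =>
    rw [← add_assoc, vdcCount_succ, vdcCount_succ]
    have := ih (by omega)
    split_ifs <;> first | omega | linarith

theorem vdcCount_mono_left {B A : ℕ} (hBA : B ≤ A) (t : ℝ) : vdcCount B t ≤ vdcCount A t := by
  simpa [vdcCount_of_nonpos _ (min_le_right t 0)] using vdcCount_add_le_add hBA (min_le_left t 0)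

theorem vdcCount_add_le_add_vdcCount {B A : ℕ} (hBA : B ≤ A) (t : ℝ) :
    vdcCount A t + B ≤ A + vdcCount B t := by
  simpa [vdcCount_of_one_le _ (le_max_right t 1)] using vdcCount_add_le_add hBA (le_max_left t 1)

theorem vdcCount_eq (N : ℕ) (t : ℝ) :
    vdcCount N t = vdcCount ((N + 1) / 2) (2 * t) + vdcCount (N / 2) (2 * t - 1) := by
  induction N with
  | zero => simp [vdcCount_zero]
  | succ N ih =>
    rw [vdcCount_succ, ih]
    obtain ⟨k, rfl | rfl⟩ := Nat.even_or_odd' N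
    · rw [show (2 * k + 1 + 1) / 2 = k + 1 by omega, show (2 * k + 1) / 2 = k by omega,
        show 2 * k / 2 = k by omega, vdcCount_succ, vdc_two_mul]
      have : vdc k / 2 < t ↔ vdc k < 2 * t := by constructor <;> intro <;> linarith
      simp only [this]
      omega
    · rw [show (2 * k + 1 + 1 + 1) / 2 = k + 1 by omega, show (2 * k + 1 + 1) / 2 = k + 1 by omega,
        show (2 * k + 1) / 2 = k by omega, vdcCount_succ _ (2 * t - 1), vdc_two_mul_add_one]
      have : 1 / 2 + vdc k / 2 < t ↔ vdc k < 2 * t - 1 := by constructor <;> intro <;> linarith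
      simp only [this]
      omega

/-- For a counting function of points of `[0, 1)`, this is subadditivity of its lift to `ℝ`:
`f s + f (s - 1)` counts the lifted points below `s ∈ [0, 2]`. -/
def CyclicSubadditive (f : ℝ → ℕ) : Prop :=
  ∀ ⦃t u : ℝ⦄, 0 ≤ t → t ≤ 1 → 0 ≤ u → u ≤ 1 → f (t + u) + f (t + u - 1) ≤ f t + f u

theorem cyclicSubadditive_vdcCount_one : CyclicSubadditive (vdcCount 1) := by
  intro t u _ _ _ _
  simp only [vdcCount_succ, vdcCount_zero, vdc_zero, zero_add]
  split_ifs <;> first | omega | linarith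

theorem CyclicSubadditive.vdcCount_double {B A : ℕ} (hBA : B ≤ A)
    (hA : CyclicSubadditive (vdcCount A)) (hB : CyclicSubadditive (vdcCount B)) :
    CyclicSubadditive fun s => vdcCount A (2 * s) + vdcCount B (2 * s - 1) := by
  intro t u ht0 ht1 hu0 hu1
  wlog htu : t ≤ u generalizing t u
  · rw [add_comm t u, add_comm (vdcCount A (2 * t) + _)]
    exact this hu0 hu1 ht0 ht1 (by linarith)
  have hle := vdcCount_le A (2 * (t + u))
  rcases le_or_gt (2 * u) 1 with hU | hU
  · have h₁ := hA (t := 2 * t) (u := 2 * u) (by linarith) (by linarith) (by linarith) hU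
    have h₂ := vdcCount_mono_left hBA (2 * t + 2 * u - 1)
    have h₃ := vdcCount_of_nonpos A (show 2 * (t + u - 1) ≤ 0 by linarith)
    have h₄ := vdcCount_of_nonpos B (show 2 * (t + u - 1) - 1 ≤ 0 by linarith)
    have h₅ := vdcCount_of_nonpos B (show 2 * t - 1 ≤ 0 by linarith)
    have h₆ := vdcCount_of_nonpos B (show 2 * u - 1 ≤ 0 by linarith)
    ring_nf at hle h₁ h₂ h₃ h₄ h₅ h₆ ⊢
    omega
  rcases le_or_gt (2 * t) 1 with hT | hT
  · have h₁ := hA (t := 2 * t) (u := 2 * u - 1) (by linarith) hT (by linarith) (by linarith)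
    have h₂ := vdcCount_add_le_add hBA (show 2 * u - 1 ≤ 2 * t + (2 * u - 1) by linarith)
    have h₃ := vdcCount_of_nonpos B (show 2 * (t + u - 1) - 1 ≤ 0 by linarith)
    have h₄ := vdcCount_of_nonpos B (show 2 * t - 1 ≤ 0 by linarith)
    have h₅ := vdcCount_of_one_le A (show 1 ≤ 2 * u by linarith)
    ring_nf at hle h₁ h₂ h₃ h₄ h₅ ⊢
    omega
  · have h₁ := hB (t := 2 * t - 1) (u := 2 * u - 1) (by linarith) (by linarith) (by linarith)
      (by linarith)
    have h₂ := vdcCount_add_le_add_vdcCount hBA (2 * (t + u - 1))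
    have h₃ := vdcCount_le B (2 * (t + u) - 1)
    have h₄ := vdcCount_of_one_le A (show 1 ≤ 2 * t by linarith)
    have h₅ := vdcCount_of_one_le A (show 1 ≤ 2 * u by linarith)
    ring_nf at hle h₁ h₂ h₃ h₄ h₅ ⊢
    omega

theorem cyclicSubadditive_vdcCount (N : ℕ) : CyclicSubadditive (vdcCount N) := by
  induction N using Nat.strong_induction_on with
  | _ N ih =>
  match N, ih with
  | 0, _ => exact fun _ _ _ _ _ _ => by simp [vdcCount_zero]
  | 1, _ => exact cyclicSubadditive_vdcCount_one
  | N + 2, ih =>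
    rw [show vdcCount (N + 2) = _ from funext (vdcCount_eq (N + 2))]
    exact .vdcCount_double (by omega) (ih _ (by omega)) (ih _ (by omega))

section Enumeration

variable {n : ℕ} {x : ℕ → ℝ}

theorem vdcCount_eq_card_filter (hx : Set.InjOn x (Set.Iic n))
    (hS : (range (n + 1)).image x = (range (n + 1)).image vdc) (t : ℝ) :
    vdcCount (n + 1) t = #{i ∈ range (n + 1) | x i < t} := by
  have hx' : Set.InjOn x ({i ∈ range (n + 1) | x i < t} : Finset ℕ) := hx.mono fun i hi => by
    simpa [Nat.lt_succ_iff] using (mem_filter.mp hi).1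
  rw [vdcCount, ← card_image_of_injective _ vdc_injective, ← filter_image (p := (· < t)), ← hS,
    filter_image, card_image_of_injOn hx']

theorem vdcCount_apply_eq (hx : StrictMonoOn x (Set.Iic n))
    (hS : (range (n + 1)).image x = (range (n + 1)).image vdc) {k : ℕ} (hk : k ≤ n) :
    vdcCount (n + 1) (x k) = k := by
  rw [vdcCount_eq_card_filter hx.injOn hS]
  convert card_range k
  ext i
  simp only [mem_filter, mem_range]
  exact ⟨fun h => (hx.lt_iff_lt (by simp; omega) hk).mp h.2,
    fun h => ⟨by omega, (hx.lt_iff_lt (by simp; omega) hk).mpr h⟩⟩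

theorem le_apply_of_vdcCount_le (hx : StrictMonoOn x (Set.Iic n))
    (hS : (range (n + 1)).image x = (range (n + 1)).image vdc) {k : ℕ} (hk : k ≤ n) {t : ℝ}
    (ht : vdcCount (n + 1) t ≤ k) : t ≤ x k := by
  by_contra! hlt
  have : range (k + 1) ⊆ {i ∈ range (n + 1) | x i < t} := fun i hi => by
    have hik : i ≤ k := by simpa [Nat.lt_succ_iff] using hi
    exact mem_filter.mpr ⟨by simp; omega,
      ((hx.le_iff_le (by simp; omega) hk).mpr hik).trans_lt hlt⟩
  have := card_le_card this
  rw [card_range, ← vdcCount_eq_card_filter hx.injOn hS] at this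
  omega

end Enumeration

theorem stmt_10_general (n : ℕ) (x : ℕ → ℝ)
    (hmono : ∀ i j, i < j → j ≤ n → x i < x j)
    (himg : ∀ y : ℝ, (∃ i, i ≤ n ∧ x i = y) ↔
      (y = 0 ∨ ∃ m, 1 ≤ m ∧ m ≤ n ∧ vdc m = y)) :
    ∀ i ≤ n, ∀ r, 1 ≤ r → r ≤ n →
      x r - x 0 ≤
        (if i + r ≤ n then x (i + r) - x i
         else (1 - x i) + x ((i + r) % (n + 1))) := by
  intro i hi r _ hr
  have hx : StrictMonoOn x (Set.Iic n) := fun a _ b hb hab => hmono a b hab hb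
  have hS : (range (n + 1)).image x = (range (n + 1)).image vdc := by
    ext y
    simp only [mem_image, mem_range, Nat.lt_succ_iff, himg]
    constructor
    · rintro (rfl | ⟨m, -, hm, rfl⟩)
      exacts [⟨0, n.zero_le, vdc_zero⟩, ⟨m, hm, rfl⟩]
    · rintro ⟨m, hm, rfl⟩
      rcases m.eq_zero_or_pos with rfl | hm0
      exacts [.inl vdc_zero, .inr ⟨m, hm0, hm, rfl⟩]
  have hbound : ∀ k ≤ n, 0 ≤ x k ∧ x k < 1 := fun k hk => by
    have : x k ∈ (range (n + 1)).image vdc := hS ▸ mem_image_of_mem x (by simp; omega)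
    obtain ⟨m, -, hm⟩ := mem_image.mp this
    exact hm ▸ ⟨vdc_nonneg m, vdc_lt_one m⟩
  have hsub := cyclicSubadditive_vdcCount (n + 1) (hbound i hi).1 (hbound i hi).2.le
    (hbound r hr).1 (hbound r hr).2.le
  rw [vdcCount_apply_eq hx hS hi, vdcCount_apply_eq hx hS hr] at hsub
  have h0 := (hbound 0 n.zero_le).1
  split_ifs with hir
  · linarith [le_apply_of_vdcCount_le hx hS hir (t := x i + x r) (by omega)]
  · rw [Nat.mod_eq_sub_mod (by omega), Nat.mod_eq_of_lt (by omega)]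
    rcases le_or_gt (x i + x r) 1 with hs | hs
    · linarith [(hbound (i + r - (n + 1)) (by omega)).1]
    · rw [vdcCount_of_one_le _ hs.le] at hsub
      linarith [le_apply_of_vdcCount_le hx hS (k := i + r - (n + 1)) (by omega)
        (t := x i + x r - 1) (by omega)]

theorem stmt_10 (n : ℕ) (x : ℕ → ℝ)
    (hx0 : x 0 = 0)
    (hmono : ∀ i j, i < j → j ≤ n → x i < x j)
    (hlt1 : x n < 1)
    (himg : ∀ y : ℝ, (∃ i, i ≤ n ∧ x i = y) ↔
      (y = 0 ∨ ∃ m, 1 ≤ m ∧ m ≤ n ∧ vdc m = y)) :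
    ∀ i ≤ n, ∀ r, 1 ≤ r → r ≤ n →
      x r - x 0 ≤
        (if i + r ≤ n then x (i + r) - x i
         else (1 - x i) + x ((i + r) % (n + 1))) :=
  stmt_10_general n x hmono himg
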